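/- arXiv:2603.18832 — 4 statements merged into one kernel-verified Lean document; each statement's English description precedes it below -/
import Mathlib

section
/- Let G(Z) = Σ_{k≥0} l_i(Z)^{q^k} / π_k(Z) and M(Z) = Σ_{k=0}^{d−1} l_i(Z)^{q^k} / π_k(Z), where l_i(Z) is a power series of positive order and π_k(Z) = β^{−k} ∏_{j=1}^k (1 − θ·l(Z)^{q^j})^s. Then G(Z^{q^d}) = π_d(Z)·(G(Z) − M(Z)). -/
/-!
STATEMENT 4: Let `G(Z) = Σ_{k≥0} l_i(Z)^{q^k} / π_k(Z)` and
`M(Z) = Σ_{k=0}^{d−1} l_i(Z)^{q^k} / π_k(Z)`, where `l_i(Z)` is a power series of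
positive order and `π_k(Z) = β^{−k} ∏_{j=1}^k (1 − θ·l(Z)^{q^j})^s`.  Then
`G(Z^{q^d}) = π_d(Z)·(G(Z) − M(Z))`.

The infinite sum defining `G` converges Z-adically (the k-th term has order ≥ q^k),
so `G` is defined coefficientwise: its n-th coefficient is the (finite) sum of the
n-th coefficients of the first n+1 terms.  Substitution `Z ↦ Z^{q^d}` is `substPow`;
the Frobenius hypotheses record that `l, l_i` have coefficients in `F_{q^d}`.
-/

/-- Substitution `Z ↦ Z^m` on formal power series: `(substPow m f)(Z) = f(Z^m)`. -/
noncomputable def substPow {K : Type*} [CommRing K] (m : ℕ) (f : PowerSeries K) :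
    PowerSeries K :=
  PowerSeries.mk fun n => if m ∣ n then PowerSeries.coeff (n / m) f else 0

namespace SubstPowAux

open PowerSeries

variable {K : Type*} [CommRing K]

lemma coeff_substPow (m n : ℕ) (f : PowerSeries K) :
    coeff n (substPow m f) = if m ∣ n then coeff (n / m) f else 0 := by
  simp [substPow]

lemma substPow_C {m : ℕ} (hm : m ≠ 0) (a : K) :
    substPow m (C a) = C a := by
  ext n
  simp only [coeff_substPow, PowerSeries.coeff_C]
  by_cases hn : n = 0
  · subst hn; simp
  · rw [if_neg hn]
    by_cases h : m ∣ n
    · have hz : n / m ≠ 0 := by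
        obtain ⟨t, rfl⟩ := h
        rw [Nat.mul_div_cancel_left t (Nat.pos_of_ne_zero hm)]
        rintro rfl
        exact hn (mul_zero m)
      rw [if_pos h, if_neg hz]
    · rw [if_neg h]

lemma substPow_one {m : ℕ} (hm : m ≠ 0) : substPow m (1 : PowerSeries K) = 1 := by
  rw [← map_one (C (R := K)), substPow_C hm, map_one]

lemma substPow_add (m : ℕ) (f g : PowerSeries K) :
    substPow m (f + g) = substPow m f + substPow m g := by
  ext n
  simp only [map_add, coeff_substPow]
  split_ifs with h <;> simp

def mulEmb (m : ℕ) (hm : 0 < m) : ℕ × ℕ ↪ ℕ × ℕ :=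
  ⟨fun p => (m * p.1, m * p.2), by
    rintro ⟨a, b⟩ ⟨c, e⟩ h
    simp only [Prod.mk.injEq] at h
    exact Prod.ext (Nat.eq_of_mul_eq_mul_left hm h.1) (Nat.eq_of_mul_eq_mul_left hm h.2)⟩

@[simp] lemma mulEmb_apply (m : ℕ) (hm : 0 < m) (p : ℕ × ℕ) :
    mulEmb m hm p = (m * p.1, m * p.2) := rfl

lemma substPow_mul {m : ℕ} (hm : m ≠ 0) (f g : PowerSeries K) :
    substPow m (f * g) = substPow m f * substPow m g := by
  have hmpos : 0 < m := Nat.pos_of_ne_zero hm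
  ext n
  simp only [coeff_substPow, PowerSeries.coeff_mul]
  by_cases hn : m ∣ n
  · obtain ⟨t, rfl⟩ := hn
    rw [if_pos ⟨t, rfl⟩, Nat.mul_div_cancel_left t hmpos]
    have hsub : (Finset.HasAntidiagonal.antidiagonal t).map (mulEmb m hmpos) ⊆
        Finset.HasAntidiagonal.antidiagonal (m * t) := by
      intro p hp
      rw [Finset.mem_map] at hp
      obtain ⟨r, hr, rfl⟩ := hp
      rw [Finset.HasAntidiagonal.mem_antidiagonal] at hr ⊢
      rw [mulEmb_apply]
      show m * r.1 + m * r.2 = m * t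
      rw [← Nat.mul_add, hr]
    rw [← Finset.sum_subset hsub, Finset.sum_map]
    · apply Finset.sum_congr rfl
      intro p _
      simp only [mulEmb_apply]
      simp [Nat.mul_div_cancel_left _ hmpos]
    · intro p hp hnp
      rw [Finset.HasAntidiagonal.mem_antidiagonal] at hp
      by_cases h1 : m ∣ p.1
      · by_cases h2 : m ∣ p.2
        · exfalso
          apply hnp
          rw [Finset.mem_map]
          refine ⟨(p.1 / m, p.2 / m), ?_, ?_⟩
          · rw [Finset.HasAntidiagonal.mem_antidiagonal]
            obtain ⟨a, ha⟩ := h1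
            obtain ⟨b, hb⟩ := h2
            have hmt : m * a + m * b = m * t := by rw [← ha, ← hb, hp]
            have hab : a + b = t :=
              Nat.eq_of_mul_eq_mul_left hmpos (by rw [Nat.mul_add, hmt])
            simp [ha, hb, Nat.mul_div_cancel_left _ hmpos, hab]
          · rw [mulEmb_apply]
            show (m * (p.1 / m), m * (p.2 / m)) = p
            rw [Nat.mul_div_cancel' h1, Nat.mul_div_cancel' h2]
        · rw [if_neg h2, mul_zero]
      · rw [if_neg h1, zero_mul]
  · rw [if_neg hn]
    symm
    apply Finset.sum_eq_zero
    intro p hp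
    rw [Finset.HasAntidiagonal.mem_antidiagonal] at hp
    by_cases h1 : m ∣ p.1
    · by_cases h2 : m ∣ p.2
      · exact absurd (hp ▸ Nat.dvd_add h1 h2) hn
      · rw [if_neg h2, mul_zero]
    · rw [if_neg h1, zero_mul]

/-- `substPow m` as a ring homomorphism, for `m ≠ 0`. -/
noncomputable def substPowHom (m : ℕ) (hm : m ≠ 0) :
    PowerSeries K →+* PowerSeries K where
  toFun := substPow m
  map_one' := substPow_one hm
  map_mul' := substPow_mul hm
  map_zero' := by ext n; simp [coeff_substPow]
  map_add' := substPow_add m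

@[simp] lemma substPowHom_apply (m : ℕ) (hm : m ≠ 0) (f : PowerSeries K) :
    substPowHom m hm f = substPow m f := rfl

end SubstPowAux

theorem stmt_4 {K : Type*} [Field K] (q : ℕ) (hq : 2 ≤ q) (d s : ℕ) (hd : 1 ≤ d)
    (hs : 1 ≤ s) (β θ : K) (hβ : β ≠ 0) (l li : PowerSeries K)
    (hl0 : PowerSeries.constantCoeff l = 0)
    (hli0 : PowerSeries.constantCoeff li = 0)
    (hlFrob : substPow (q ^ d) l = l ^ q ^ d)
    (hliFrob : substPow (q ^ d) li = li ^ q ^ d)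
    (π : ℕ → PowerSeries K)
    (hπ : ∀ k, π k = PowerSeries.C (β⁻¹ ^ k) *
      ∏ j ∈ Finset.Icc 1 k, (1 - PowerSeries.C θ * l ^ q ^ j) ^ s)
    (G M : PowerSeries K)
    (hG : G = PowerSeries.mk fun n =>
      ∑ k ∈ Finset.range (n + 1), PowerSeries.coeff n (li ^ q ^ k * (π k)⁻¹))
    (hM : M = ∑ k ∈ Finset.range d, li ^ q ^ k * (π k)⁻¹) :
    substPow (q ^ d) G = π d * (G - M) := by
  classical
  open PowerSeries SubstPowAux in
  have hq0 : q ≠ 0 := by omega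
  have hm : q ^ d ≠ 0 := pow_ne_zero d hq0
  set m : ℕ := q ^ d with hmdef
  set S : PowerSeries K →+* PowerSeries K := SubstPowAux.substPowHom m hm with hSdef
  have hS : ∀ f : PowerSeries K, S f = substPow m f := fun _ => rfl
  set T : ℕ → PowerSeries K := fun k => li ^ q ^ k * (π k)⁻¹ with hT
  -- constant coefficient of π k
  have hβ' : β⁻¹ ≠ 0 := inv_ne_zero hβ
  have hπc : ∀ k, PowerSeries.constantCoeff (π k) = β⁻¹ ^ k := by
    intro k
    rw [hπ k, map_mul, PowerSeries.constantCoeff_C, map_prod]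
    have : ∀ j ∈ Finset.Icc 1 k,
        PowerSeries.constantCoeff ((1 - PowerSeries.C θ * l ^ q ^ j) ^ s) = 1 := by
      intro j _
      rw [map_pow, map_sub, map_one, map_mul, PowerSeries.constantCoeff_C, map_pow, hl0,
        zero_pow (pow_ne_zero j hq0), mul_zero, sub_zero, one_pow]
    rw [Finset.prod_congr rfl this, Finset.prod_const_one, mul_one]
  have hπc0 : ∀ k, PowerSeries.constantCoeff (π k) ≠ 0 := by
    intro k; rw [hπc k]; exact pow_ne_zero k hβ'
  have hπ0 : ∀ k, π k ≠ 0 := by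
    intro k h; exact hπc0 k (by rw [h]; simp)
  -- step recursion for π
  have hstep : ∀ n, π (n + 1) =
      π n * (PowerSeries.C β⁻¹ * (1 - PowerSeries.C θ * l ^ q ^ (n + 1)) ^ s) := by
    intro n
    rw [hπ, hπ, Finset.prod_Icc_succ_top (Nat.succ_le_succ (Nat.zero_le n)), pow_succ, map_mul]
    ring
  -- substPow of π k
  have hSl : S l = l ^ q ^ d := hlFrob
  have hSπ : ∀ k, S (π k) = PowerSeries.C (β⁻¹ ^ k) *
      ∏ j ∈ Finset.Icc 1 k, (1 - PowerSeries.C θ * l ^ q ^ (d + j)) ^ s := by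
    intro k
    rw [hπ k, map_mul, map_prod]
    rw [show S (PowerSeries.C (β⁻¹ ^ k)) = PowerSeries.C (β⁻¹ ^ k) from substPow_C hm _]
    congr 1
    apply Finset.prod_congr rfl
    intro j _
    rw [map_pow, map_sub, map_one, map_mul,
      show S (PowerSeries.C θ) = PowerSeries.C θ from substPow_C hm _,
      map_pow, hSl, ← pow_mul, ← pow_add]
  have hπdk : ∀ k, π d * S (π k) = π (d + k) := by
    intro k
    induction k with
    | zero => rw [hSπ 0]; simp
    | succ n ih =>
      rw [show d + (n + 1) = (d + n) + 1 by ring, hstep (d + n), ← ih, hSπ (n + 1),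
        Finset.prod_Icc_succ_top (Nat.succ_le_succ (Nat.zero_le n)), pow_succ, map_mul, hSπ n]
      ring
  -- substPow of (π k)⁻¹
  have hSπinv : ∀ k, S ((π k)⁻¹) = π d * (π (d + k))⁻¹ := by
    intro k
    apply mul_right_cancel₀ (hπ0 (d + k))
    calc S ((π k)⁻¹) * π (d + k) = S ((π k)⁻¹) * (π d * S (π k)) := by rw [hπdk k]
      _ = π d * (S ((π k)⁻¹) * S (π k)) := by ring
      _ = π d * S ((π k)⁻¹ * π k) := by rw [map_mul]
      _ = π d := by rw [PowerSeries.inv_mul_cancel _ (hπc0 k), map_one, mul_one]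
      _ = π d * (π (d + k))⁻¹ * π (d + k) := by
          rw [mul_assoc, PowerSeries.inv_mul_cancel _ (hπc0 (d + k)), mul_one]
  -- substPow of T k
  have hST : ∀ k, S (T k) = π d * T (d + k) := by
    intro k
    rw [hT]
    show S (li ^ q ^ k * (π k)⁻¹) = _
    rw [map_mul, map_pow, show S li = li ^ q ^ d from hliFrob, ← pow_mul, ← pow_add, hSπinv k]
    ring
  -- partial sums
  set GN : ℕ → PowerSeries K := fun N => ∑ k ∈ Finset.range N, T k with hGN
  have hGNdef : ∀ N, GN N = ∑ k ∈ Finset.range N, T k := fun _ => rfl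
  have hSGN : ∀ N, S (GN N) = π d * (GN (d + N) - GN d) := by
    intro N
    have hsplit : ∀ N, GN (d + N) = GN d + ∑ k ∈ Finset.range N, T (d + k) := by
      intro N
      induction N with
      | zero => simp
      | succ n ih =>
        rw [show d + (n + 1) = (d + n) + 1 by ring, hGNdef, Finset.sum_range_succ,
          ← hGNdef, ih, Finset.sum_range_succ]
        ring
    rw [hsplit, hGNdef, map_sum, Finset.sum_congr rfl (fun k _ => hST k), ← Finset.mul_sum]
    ring
  have hMGN : M = GN d := by rw [hGNdef]; exact hM
  -- coefficient vanishing for high terms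
  have hT0 : ∀ n k, n < k → PowerSeries.coeff n (T k) = 0 := by
    intro n k hnk
    have hXli : (PowerSeries.X : PowerSeries K) ∣ li := PowerSeries.X_dvd_iff.mpr hli0
    have hdvd : (PowerSeries.X : PowerSeries K) ^ q ^ k ∣ T k :=
      Dvd.dvd.mul_right (pow_dvd_pow_of_dvd hXli _) _
    have hnq : n < q ^ k := lt_of_lt_of_le hnk (le_of_lt (Nat.lt_pow_self (n := k) (by omega)))
    exact PowerSeries.X_pow_dvd_iff.mp hdvd n hnq
  have hGcoeff : ∀ n N, n < N → PowerSeries.coeff n G = PowerSeries.coeff n (GN N) := by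
    intro n N hnN
    rw [hG, PowerSeries.coeff_mk, hGNdef, map_sum]
    apply Finset.sum_subset
    · intro k hk
      rw [Finset.mem_range] at hk ⊢
      omega
    · intro k _ hk
      rw [Finset.mem_range] at hk
      exact hT0 n k (by omega)
  -- final coefficientwise argument
  ext n
  have h1 : PowerSeries.coeff n (substPow m G) =
      PowerSeries.coeff n (substPow m (GN (n + 1))) := by
    rw [coeff_substPow, coeff_substPow]
    split_ifs with h
    · exact hGcoeff (n / m) (n + 1) (Nat.lt_succ_of_le (Nat.div_le_self n m))
    · rfl
  have h2 : S (GN (n + 1)) = π d * (GN (d + (n + 1)) - M) := by rw [hSGN, hMGN]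
  have h3 : π d * (GN (d + (n + 1)) - M) - π d * (G - M) = π d * (GN (d + (n + 1)) - G) := by
    ring
  have h4 : PowerSeries.coeff n (π d * (GN (d + (n + 1)) - G)) = 0 := by
    rw [PowerSeries.coeff_mul]
    apply Finset.sum_eq_zero
    intro p hp
    rw [Finset.HasAntidiagonal.mem_antidiagonal] at hp
    have : PowerSeries.coeff p.2 (GN (d + (n + 1)) - G) = 0 := by
      rw [map_sub, ← hGcoeff p.2 (d + (n + 1)) (by omega), sub_self]
    rw [this, mul_zero]
  have h5 : PowerSeries.coeff n (π d * (GN (d + (n + 1)) - M)) =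
      PowerSeries.coeff n (π d * (G - M)) := by
    have h6 := congrArg (PowerSeries.coeff n) h3
    rw [map_sub, h4] at h6
    exact eq_of_sub_eq_zero h6
  rw [h1, ← hS, h2, h5]
end

section
/- Let f_1(z), …, f_s(z) ∈ K[[z]] be algebraically independent over K(z), where K is a field, and let N > s! be an integer. Then there exists a nonzero polynomial R ∈ K[z, X_1, …, X_s] with deg_z(R) ≤ N, total degree in the X_i at most N, and such that the power series R(z, f_1(z), …, f_s(z)) has z-adic order at least N^{s+1}/s!. -/
/-!
STATEMENT 11: Let `f_1(z), …, f_s(z) ∈ K[[z]]` be algebraically independent over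
`K(z)` (equivalently, `z, f_1, …, f_s` are algebraically independent over `K`),
and let `N > s!` be an integer.  Then there exists a nonzero polynomial
`R ∈ K[z, X_1, …, X_s]` with `deg_z(R) ≤ N`, total degree in the `X_i` at most `N`,
such that the power series `R(z, f_1(z), …, f_s(z))` has z-adic order at least
`N^{s+1}/s!`.

Below, variable `0` of the multivariate polynomial plays the role of `z` (sent to
`PowerSeries.X`) and variable `i.succ` the role of `X_i` (sent to `f i`).
-/

lemma auxA (s N : ℕ) (h : Nat.factorial s < N) :
    N ^ (s + 1) + Nat.factorial s ≤ (N + 1) ^ (s + 1) := by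
  induction s with
  | zero => simp [Nat.factorial]
  | succ s ih =>
    have hs : Nat.factorial s < N :=
      lt_of_le_of_lt (Nat.factorial_le (Nat.le_succ s)) h
    have ih' := ih hs
    have hN : s + 1 ≤ N := le_trans (Nat.self_le_factorial (s+1)) h.le
    have h1 : (N ^ (s+1) + Nat.factorial s) * (N + 1) ≤ (N + 1) ^ (s + 2) := by
      calc (N ^ (s+1) + Nat.factorial s) * (N + 1)
          ≤ (N + 1) ^ (s+1) * (N + 1) := Nat.mul_le_mul_right _ ih'
        _ = (N + 1) ^ (s + 2) := by ring
    have h2 : N ^ (s + 2) + Nat.factorial (s + 1)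
        ≤ (N ^ (s+1) + Nat.factorial s) * (N + 1) := by
      rw [Nat.factorial_succ]
      have e : (N ^ (s+1) + Nat.factorial s) * (N + 1)
          = N ^ (s+2) + N^(s+1) + Nat.factorial s * N + Nat.factorial s := by ring
      rw [e]
      have h3 : (s+1) * Nat.factorial s ≤ Nat.factorial s * N := by
        rw [mul_comm]; exact Nat.mul_le_mul_left _ hN
      omega
    exact le_trans h2 h1

lemma auxB (s N : ℕ) : (N + 1) ^ s ≤ (N + s).descFactorial s := by
  induction s with
  | zero => simp
  | succ s ih =>
    rw [show N + (s+1) = (N + s) + 1 from rfl, Nat.succ_descFactorial_succ, pow_succ,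
      mul_comm ((N+1)^s) (N+1)]
    exact Nat.mul_le_mul (by omega) ih


theorem stmt_11 {K : Type*} [Field K] (s : ℕ) (f : Fin s → PowerSeries K)
    (hindep : AlgebraicIndependent K (Fin.cons PowerSeries.X f :
      Fin (s + 1) → PowerSeries K))
    (N : ℕ) (hN : Nat.factorial s < N) :
    ∃ R : MvPolynomial (Fin (s + 1)) K, R ≠ 0 ∧
      (∀ m ∈ R.support, m 0 ≤ N ∧ (∑ i : Fin s, m i.succ) ≤ N) ∧
      ((⌈(N : ℚ) ^ (s + 1) / (Nat.factorial s : ℚ)⌉₊ : ℕ∞) ≤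
        (MvPolynomial.aeval (Fin.cons PowerSeries.X f) R).order) := by
  classical
  set g : Fin (s + 1) → PowerSeries K := Fin.cons PowerSeries.X f with hg
  set M : ℕ := ⌈(N : ℚ) ^ (s + 1) / (Nat.factorial s : ℚ)⌉₊ with hM
  -- exponent map
  set φ : Fin (N + 1) × Sym (Fin (s + 1)) N → (Fin (s + 1) →₀ ℕ) := fun p =>
    Finsupp.cons (p.1 : ℕ)
      (Finsupp.equivFunOnFinite.symm fun i : Fin s =>
        Multiset.count i.succ (p.2 : Multiset (Fin (s + 1)))) with hφdef
  have φ_zero : ∀ p : Fin (N + 1) × Sym (Fin (s + 1)) N, φ p 0 = (p.1 : ℕ) := fun p => Finsupp.cons_zero _ _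
  have φ_succ : ∀ (p : Fin (N + 1) × Sym (Fin (s + 1)) N) (i : Fin s),
      φ p i.succ = Multiset.count i.succ (p.2 : Multiset (Fin (s + 1))) := by
    intro p i
    simp [hφdef, Finsupp.cons_succ]
  -- total count
  have count_sum : ∀ μ : Sym (Fin (s + 1)) N,
      (Multiset.count 0 (μ : Multiset (Fin (s + 1)))
        + ∑ i : Fin s, Multiset.count i.succ (μ : Multiset (Fin (s + 1)))) = N := by
    intro μ
    have h1 : ∑ a : Fin (s + 1), Multiset.count a (μ : Multiset (Fin (s + 1)))
        = Multiset.card (μ : Multiset (Fin (s + 1))) := by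
      rw [← Multiset.toFinset_sum_count_eq]
      refine (Finset.sum_subset (Finset.subset_univ _) ?_).symm
      intro x _ hx
      simpa [Multiset.count_eq_zero] using fun h => hx (Multiset.mem_toFinset.mpr h)
    rw [← Fin.sum_univ_succ (fun a => Multiset.count a (μ : Multiset (Fin (s + 1)))), h1]
    exact μ.2
  have φ_sum_le : ∀ p : Fin (N + 1) × Sym (Fin (s + 1)) N, (∑ i : Fin s, φ p i.succ) ≤ N := by
    intro p
    have := count_sum p.2
    calc (∑ i : Fin s, φ p i.succ)
        = ∑ i : Fin s, Multiset.count i.succ (p.2 : Multiset (Fin (s + 1))) :=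
          Finset.sum_congr rfl fun i _ => φ_succ p i
      _ ≤ N := by omega
  -- injectivity
  have hφ : Function.Injective φ := by
    rintro ⟨a, μ⟩ ⟨b, ν⟩ h
    have h0 : (a : ℕ) = (b : ℕ) := by
      have := congrArg (fun m : Fin (s + 1) →₀ ℕ => m 0) h
      simpa [φ_zero] using this
    have hsucc : ∀ i : Fin s,
        Multiset.count i.succ (μ : Multiset (Fin (s + 1)))
          = Multiset.count i.succ (ν : Multiset (Fin (s + 1))) := by
      intro i
      have := congrArg (fun m : Fin (s + 1) →₀ ℕ => m i.succ) h
      simpa [φ_succ] using this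
    have hzero : Multiset.count 0 (μ : Multiset (Fin (s + 1)))
        = Multiset.count 0 (ν : Multiset (Fin (s + 1))) := by
      have h1 := count_sum μ
      have h2 := count_sum ν
      have h3 : ∑ i : Fin s, Multiset.count i.succ (μ : Multiset (Fin (s + 1)))
          = ∑ i : Fin s, Multiset.count i.succ (ν : Multiset (Fin (s + 1))) :=
        Finset.sum_congr rfl fun i _ => hsucc i
      omega
    have hμν : μ = ν := by
      apply Sym.coe_injective
      apply Multiset.ext.mpr
      intro a
      induction a using Fin.cases with
      | zero => exact hzero
      | succ i => exact hsucc i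
    exact Prod.ext (Fin.val_injective h0) hμν
  -- cardinality
  have hcard : Fintype.card (Fin (N + 1) × Sym (Fin (s + 1)) N) = (N + 1) * (s + N).choose N := by
    rw [Fintype.card_prod, Fintype.card_fin, Sym.card_sym_eq_choose, Fintype.card_fin,
      show s + 1 + N - 1 = s + N from by omega]
  -- key counting inequality
  have hfac_pos : 0 < Nat.factorial s := Nat.factorial_pos s
  have hkey : N ^ (s + 1) + Nat.factorial s ≤ Fintype.card (Fin (N + 1) × Sym (Fin (s + 1)) N) * Nat.factorial s := by
    have h0 : (s + N).choose N = (N + s).choose s := by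
      rw [Nat.add_comm s N]
      exact Nat.choose_symm_of_eq_add rfl
    have h1 : (s + N).choose N * Nat.factorial s = (N + s).descFactorial s := by
      rw [Nat.descFactorial_eq_factorial_mul_choose, h0]
      ring
    calc N ^ (s + 1) + Nat.factorial s
        ≤ (N + 1) ^ (s + 1) := auxA s N hN
      _ = (N + 1) * (N + 1) ^ s := by ring
      _ ≤ (N + 1) * (N + s).descFactorial s := Nat.mul_le_mul_left _ (auxB s N)
      _ = (N + 1) * ((s + N).choose N * Nat.factorial s) := by rw [h1]
      _ = Fintype.card (Fin (N + 1) × Sym (Fin (s + 1)) N) * Nat.factorial s := by rw [hcard]; ring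
  have hMlt : M < Fintype.card (Fin (N + 1) × Sym (Fin (s + 1)) N) := by
    have hq : (0 : ℚ) ≤ (N : ℚ) ^ (s + 1) / (Nat.factorial s : ℚ) := by positivity
    have hceil : (M : ℚ) < (N : ℚ) ^ (s + 1) / (Nat.factorial s : ℚ) + 1 :=
      Nat.ceil_lt_add_one hq
    have hfacQ : (0 : ℚ) < (Nat.factorial s : ℚ) := by exact_mod_cast hfac_pos
    have h2 : (M : ℚ) * (Nat.factorial s : ℚ)
        < (N : ℚ) ^ (s + 1) + (Nat.factorial s : ℚ) := by
      have := mul_lt_mul_of_pos_right hceil hfacQ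
      rwa [add_mul, one_mul, div_mul_cancel₀ _ (ne_of_gt hfacQ)] at this
    have h3 : M * Nat.factorial s < N ^ (s + 1) + Nat.factorial s := by
      exact_mod_cast h2
    have h4 : M * Nat.factorial s < Fintype.card (Fin (N + 1) × Sym (Fin (s + 1)) N) * Nat.factorial s :=
      lt_of_lt_of_le h3 hkey
    exact Nat.lt_of_mul_lt_mul_right h4
  -- linear map
  set B : Fin (N + 1) × Sym (Fin (s + 1)) N → MvPolynomial (Fin (s + 1)) K := fun p => MvPolynomial.monomial (φ p) 1 with hB
  set T : (Fin (N + 1) × Sym (Fin (s + 1)) N → K) →ₗ[K] (Fin M → K) :=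
    LinearMap.pi fun k : Fin M =>
      (PowerSeries.coeff (R := K) (k : ℕ)) ∘ₗ (MvPolynomial.aeval g).toLinearMap ∘ₗ
        Fintype.linearCombination K B with hT
  have hnotinj : ¬ Function.Injective T := by
    intro hinj
    have hle := LinearMap.finrank_le_finrank_of_injective hinj
    rw [Module.finrank_fintype_fun_eq_card, Module.finrank_fintype_fun_eq_card,
      Fintype.card_fin] at hle
    omega
  obtain ⟨x, y, hxy, hne⟩ := Function.not_injective_iff.mp hnotinj
  set c : Fin (N + 1) × Sym (Fin (s + 1)) N → K := x - y with hc
  have hcne : c ≠ 0 := sub_ne_zero.mpr hne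
  have hTc : T c = 0 := by rw [hc, map_sub, hxy, sub_self]
  -- the polynomial
  set R : MvPolynomial (Fin (s + 1)) K :=
    ∑ p : Fin (N + 1) × Sym (Fin (s + 1)) N, MvPolynomial.monomial (φ p) (c p) with hR
  have hlc : Fintype.linearCombination K B c = R := by
    rw [Fintype.linearCombination_apply, hR]
    exact Finset.sum_congr rfl fun p _ => by
      rw [hB, MvPolynomial.smul_monomial, smul_eq_mul, mul_one]
  have hcoeff : ∀ p : Fin (N + 1) × Sym (Fin (s + 1)) N, MvPolynomial.coeff (φ p) R = c p := by
    intro p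
    rw [hR, MvPolynomial.coeff_sum]
    rw [Finset.sum_eq_single p]
    · simp [MvPolynomial.coeff_monomial]
    · intro q _ hq
      rw [MvPolynomial.coeff_monomial, if_neg (fun h => hq (hφ h))]
    · intro h; exact absurd (Finset.mem_univ p) h
  -- R ≠ 0
  obtain ⟨p0, hp0⟩ : ∃ p, c p ≠ 0 := by
    by_contra h
    push_neg at h
    exact hcne (funext h)
  have hRne : R ≠ 0 := fun h => hp0 (by rw [← hcoeff p0, h, MvPolynomial.coeff_zero])
  refine ⟨R, hRne, ?_, ?_⟩
  · -- support condition
    intro m hm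
    have : ∃ p : Fin (N + 1) × Sym (Fin (s + 1)) N, φ p = m := by
      by_contra h
      push_neg at h
      have : MvPolynomial.coeff m R = 0 := by
        rw [hR, MvPolynomial.coeff_sum]
        refine Finset.sum_eq_zero fun q _ => ?_
        rw [MvPolynomial.coeff_monomial, if_neg (h q)]
      exact (MvPolynomial.mem_support_iff.mp hm) this
    obtain ⟨p, rfl⟩ := this
    exact ⟨by rw [φ_zero]; exact Fin.is_le _, φ_sum_le p⟩
  · -- order condition
    have hcoeffzero : ∀ i < M, PowerSeries.coeff (R := K) i (MvPolynomial.aeval g R) = 0 := by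
      intro i hi
      have := congrFun hTc ⟨i, hi⟩
      simpa [hT, LinearMap.pi_apply, hlc] using this
    exact PowerSeries.nat_le_order _ M hcoeffzero
end

section
/- Let g ∈ K((z)) be algebraic over k(z), where k = F_q(θ) and K/k finite, and let α ∈ \overline{k} with v_∞(α) > 0 be such that g(α^{d^k}) is defined for all k ≥ 0 (d ≥ 2 an integer). Then there exist positive constants c_1, c_2 such that for all k ≥ 0: (i) there is a denominator D_k ∈ F_q[θ] of g(α^{d^k}) with deg_θ(D_k) ≤ c_1·d^k; (ii) house(g(α^{d^k})) ≤ c_2·d^k. -/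
/-!
STATEMENT 15: Let `g ∈ K((z))` be algebraic over `k(z)`, where `k = F_q(θ)`, and
let `α ∈ k̄` with `v_∞(α) > 0` be such that `g(α^{d^t})` is defined for all `t ≥ 0`
(`d ≥ 2` an integer).  Then there exist positive constants `c_1, c_2` such that for
all `t ≥ 0`: (i) there is a denominator `D_t ∈ F_q[θ]` of `g(α^{d^t})` with
`deg_θ(D_t) ≤ c_1·d^t`; (ii) `house(g(α^{d^t})) ≤ c_2·d^t`.

Setting: `Ω` is an algebraically closed algebraic extension of `k = RatFunc Fq`,
equipped with an additive valuation `v : Ω → EReal` extending `v_∞` (normalized by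
`v(θ) = −1`).  The algebraicity of `g` is recorded through a polynomial relation
`b_m(z)·g^m = Σ_{i<m} b_i(z)·g^i` with `b_i ∈ F_q[θ][z]`, `b_m ≠ 0`; the sequence
`G t` records the values `g(α^{d^t})`, and the relation is evaluated at `z = α^{d^t}`
(with leading coefficient nonvanishing there).  A denominator of `x` is a nonzero
`D ∈ F_q[θ]` with `D·x` integral over `F_q[θ]`.
-/



open Polynomial Finset

namespace Stmt15

variable {R : Type*} [CommRing R]

/-- Sylvester-style matrix with formal sizes `n₁` (for `P`) and `n₂` (for `Q`):
columns `j < n₂` hold shifts of `P`, columns `j ≥ n₂` hold shifts of `Q`. -/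
def sylMat (n₁ n₂ : ℕ) (P Q : R[X]) : Matrix (Fin (n₁ + n₂)) (Fin (n₁ + n₂)) R :=
  Matrix.of fun i j =>
    if (j : ℕ) < n₂ then (if (j : ℕ) ≤ (i : ℕ) then P.coeff ((i : ℕ) - (j : ℕ)) else 0)
    else (if (j : ℕ) - n₂ ≤ (i : ℕ) then Q.coeff ((i : ℕ) - ((j : ℕ) - n₂)) else 0)

lemma sylMat_map {S : Type*} [CommRing S] (f : R →+* S) (n₁ n₂ : ℕ) (P Q : R[X]) :
    (sylMat n₁ n₂ P Q).map f = sylMat n₁ n₂ (P.map f) (Q.map f) := by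
  ext i j
  simp only [sylMat, Matrix.map_apply, Matrix.of_apply, coeff_map]
  split_ifs <;> simp

lemma dot_shift {K : Type*} [CommRing K] (x : K) (P : K[X]) (jj KK : ℕ)
    (h : jj + P.natDegree < KK) :
    ∑ i ∈ range KK, x ^ i * (if jj ≤ i then P.coeff (i - jj) else 0) = x ^ jj * P.eval x := by
  have hjK : jj ≤ KK := by omega
  rw [range_eq_Ico, ← Finset.sum_Ico_consecutive _ (Nat.zero_le jj) hjK]
  have h1 : ∑ i ∈ Ico 0 jj, x ^ i * (if jj ≤ i then P.coeff (i - jj) else 0) = 0 := by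
    apply Finset.sum_eq_zero
    intro i hi
    simp only [mem_Ico] at hi
    rw [if_neg (by omega), mul_zero]
  rw [h1, zero_add, Finset.sum_Ico_eq_sum_range]
  have h2 : ∀ k ∈ range (KK - jj), x ^ (jj + k) * (if jj ≤ jj + k then P.coeff (jj + k - jj) else 0)
      = x ^ jj * (P.coeff k * x ^ k) := by
    intro k _
    rw [if_pos (by omega)]
    have : jj + k - jj = k := by omega
    rw [this, pow_add]
    ring
  rw [Finset.sum_congr rfl h2, ← Finset.mul_sum]
  congr 1
  rw [eval_eq_sum_range' (n := KK - jj) (by omega)]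

lemma det_sylMat_eq_zero {K : Type*} [Field K] {n₁ n₂ : ℕ} {P Q : K[X]}
    (hP : P.natDegree ≤ n₁) (hQ : Q.natDegree ≤ n₂) (hpos : 0 < n₁ + n₂)
    (x : K) (hx : P.eval x = 0) (hxq : Q.eval x = 0) :
    (sylMat n₁ n₂ P Q).det = 0 := by
  rw [← Matrix.exists_vecMul_eq_zero_iff]
  refine ⟨fun i => x ^ (i : ℕ), ?_, ?_⟩
  · intro hw
    have := congrFun hw ⟨0, hpos⟩
    simp at this
  · funext j
    simp only [Matrix.vecMul, dotProduct, sylMat, Matrix.of_apply, Pi.zero_apply]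
    rw [Fin.sum_univ_eq_sum_range (fun i => x ^ i *
      (if (j : ℕ) < n₂ then (if (j : ℕ) ≤ i then P.coeff (i - (j : ℕ)) else 0)
        else (if (j : ℕ) - n₂ ≤ i then Q.coeff (i - ((j : ℕ) - n₂)) else 0))) (n₁ + n₂)]
    by_cases hj : (j : ℕ) < n₂
    · simp only [hj, if_true]
      rw [dot_shift x P (j : ℕ) (n₁ + n₂) (by omega), hx, mul_zero]
    · simp only [hj, if_false]
      have hj2 : (j : ℕ) - n₂ < n₁ := by have := j.isLt; omega
      rw [dot_shift x Q ((j : ℕ) - n₂) (n₁ + n₂) (by omega), hxq, mul_zero]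

end Stmt15

namespace Stmt15

variable {K : Type*} [Field K]

lemma coeff_wsum (w : ℕ → K) (n i : ℕ) :
    (∑ j ∈ range n, C (w j) * X ^ j).coeff i = if i < n then w i else 0 := by
  rw [finset_sum_coeff]
  have : ∀ j ∈ range n, (C (w j) * X ^ j).coeff i = if j = i then w j else 0 := by
    intro j _
    rw [coeff_C_mul, coeff_X_pow]
    by_cases h : i = j
    · subst h; simp
    · rw [if_neg h, if_neg (Ne.symm h), mul_zero]
  rw [Finset.sum_congr rfl this, Finset.sum_ite_eq' (range n) i w]
  simp [Finset.mem_range]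

lemma natDegree_wsum_le (w : ℕ → K) (n c : ℕ) (h : n ≤ c + 1) :
    (∑ j ∈ range n, C (w j) * X ^ j).natDegree ≤ c := by
  apply natDegree_sum_le_of_forall_le
  intro j hj
  simp only [Finset.mem_range] at hj
  exact le_trans (natDegree_C_mul_X_pow_le _ _) (by omega)

lemma coeff_wsum_mul (w : ℕ → K) (P : K[X]) (n i : ℕ) :
    ((∑ j ∈ range n, C (w j) * X ^ j) * P).coeff i
      = ∑ j ∈ range n, w j * (if j ≤ i then P.coeff (i - j) else 0) := by
  rw [Finset.sum_mul, finset_sum_coeff]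
  apply Finset.sum_congr rfl
  intro j _
  have h : C (w j) * X ^ j * P = C (w j) * (P * X ^ j) := by ring
  rw [h, coeff_C_mul, coeff_mul_X_pow']

lemma det_sylMat_ne_zero {n₁ n₂ : ℕ} {P Q : K[X]}
    (hP : P.natDegree = n₁) (h1 : 1 ≤ n₁) (hP0 : P ≠ 0)
    (hQ : Q.natDegree ≤ n₂) (hcop : IsCoprime P Q) :
    (sylMat n₁ n₂ P Q).det ≠ 0 := by
  intro hdet
  rw [← Matrix.exists_mulVec_eq_zero_iff] at hdet
  obtain ⟨v, hv0, hv⟩ := hdet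
  set w : ℕ → K := fun j => if h : j < n₁ + n₂ then v ⟨j, h⟩ else 0 with hw
  set A : K[X] := ∑ j ∈ range n₂, C (w j) * X ^ j with hA
  set B : K[X] := ∑ j ∈ range n₁, C (w (n₂ + j)) * X ^ j with hB
  have hdegB : B.natDegree ≤ n₁ - 1 := natDegree_wsum_le _ _ _ (by omega)
  -- the matrix-vector computation
  have hmv : ∀ i : ℕ, i < n₁ + n₂ →
      (∑ j ∈ range n₂, w j * (if j ≤ i then P.coeff (i - j) else 0))
        + (∑ j ∈ range n₁, w (n₂ + j) * (if j ≤ i then Q.coeff (i - j) else 0)) = 0 := by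
    intro i hi
    have hvi := congrFun hv ⟨i, hi⟩
    rw [Matrix.mulVec, dotProduct] at hvi
    simp only [Pi.zero_apply] at hvi
    set f : ℕ → K := fun j =>
      (if j < n₂ then (if j ≤ i then P.coeff (i - j) else 0)
        else (if j - n₂ ≤ i then Q.coeff (i - (j - n₂)) else 0)) * w j with hf
    have hterm : ∀ j : Fin (n₁ + n₂),
        sylMat n₁ n₂ P Q ⟨i, hi⟩ j * v j = f (j : ℕ) := by
      intro j
      have hvw : v j = w (j : ℕ) := by
        rw [hw]
        simp only [j.isLt, dif_pos]
      rw [hvw, hf, sylMat]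
      rfl
    rw [Finset.sum_congr rfl (fun j _ => hterm j)] at hvi
    rw [Fin.sum_univ_eq_sum_range f (n₁ + n₂)] at hvi
    rw [range_eq_Ico, ← Finset.sum_Ico_consecutive f (Nat.zero_le n₂) (by omega : n₂ ≤ n₁ + n₂),
      Finset.sum_Ico_eq_sum_range f n₂ (n₁ + n₂)] at hvi
    have e1 : ∑ j ∈ Ico 0 n₂, f j = ∑ j ∈ range n₂, w j * (if j ≤ i then P.coeff (i - j) else 0) := by
      rw [← range_eq_Ico]
      apply Finset.sum_congr rfl
      intro j hj
      simp only [Finset.mem_range] at hj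
      rw [hf]
      simp only [hj, if_pos]
      ring
    have e2 : ∑ k ∈ range (n₁ + n₂ - n₂), f (n₂ + k)
        = ∑ j ∈ range n₁, w (n₂ + j) * (if j ≤ i then Q.coeff (i - j) else 0) := by
      have hn : n₁ + n₂ - n₂ = n₁ := by omega
      rw [hn]
      apply Finset.sum_congr rfl
      intro k hk
      rw [hf]
      simp only
      rw [if_neg (by omega)]
      have h2 : n₂ + k - n₂ = k := by omega
      rw [h2]
      ring
    rw [e1, e2] at hvi
    exact hvi
  -- key identity
  have key : A * P + B * Q = 0 := by
    ext i
    rw [coeff_add, coeff_zero, hA, hB, coeff_wsum_mul, coeff_wsum_mul]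
    by_cases hi : i < n₁ + n₂
    · exact hmv i hi
    · push_neg at hi
      have c1 : ∑ j ∈ range n₂, w j * (if j ≤ i then P.coeff (i - j) else 0) = 0 := by
        apply Finset.sum_eq_zero
        intro j hj
        simp only [Finset.mem_range] at hj
        rw [if_pos (by omega), coeff_eq_zero_of_natDegree_lt (by omega), mul_zero]
      have c2 : ∑ j ∈ range n₁, w (n₂ + j) * (if j ≤ i then Q.coeff (i - j) else 0) = 0 := by
        apply Finset.sum_eq_zero
        intro j hj
        simp only [Finset.mem_range] at hj
        rw [if_pos (by omega), coeff_eq_zero_of_natDegree_lt (by omega), mul_zero]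
      rw [c1, c2, add_zero]
  -- derive contradiction
  by_cases hBz : B = 0
  · have hAP : A * P = 0 := by
      rw [hBz, zero_mul, add_zero] at key
      exact key
    have hAz : A = 0 := by
      rcases mul_eq_zero.mp hAP with h | h
      · exact h
      · exact absurd h hP0
    apply hv0
    funext j
    have hj := j.isLt
    by_cases hjn : (j : ℕ) < n₂
    · have : A.coeff (j : ℕ) = w (j : ℕ) := by
        rw [hA, coeff_wsum, if_pos hjn]
      rw [hAz] at this
      simp only [coeff_zero] at this
      have hvw : v j = w (j : ℕ) := by
        rw [hw]; simp only [j.isLt, dif_pos]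
      rw [Pi.zero_apply, hvw, ← this]
    · have hlt : (j : ℕ) - n₂ < n₁ := by omega
      have : B.coeff ((j : ℕ) - n₂) = w (n₂ + ((j : ℕ) - n₂)) := by
        rw [hB, coeff_wsum, if_pos hlt]
      rw [hBz] at this
      simp only [coeff_zero] at this
      have he : n₂ + ((j : ℕ) - n₂) = (j : ℕ) := by omega
      rw [he] at this
      have hvw : v j = w (j : ℕ) := by
        rw [hw]; simp only [j.isLt, dif_pos]
      rw [Pi.zero_apply, hvw, ← this]
  · have hdvd : P ∣ B * Q := ⟨-A, by linear_combination key⟩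
    have hPB : P ∣ B := hcop.dvd_of_dvd_mul_right hdvd
    have := natDegree_le_of_dvd hPB hBz
    omega

end Stmt15

namespace Stmt15

variable {A : Type*} [CommRing A]

/-- All coefficients of `p` (a polynomial over the polynomial ring `A[θ]`) have
θ-degree at most `c`. -/
def HB (c : ℕ) (p : Polynomial (Polynomial A)) : Prop :=
  ∀ j, (p.coeff j).natDegree ≤ c

lemma HB_zero (c : ℕ) : HB c (0 : Polynomial (Polynomial A)) := by
  intro j; simp

lemma HB_C {c : ℕ} {a : Polynomial A} (h : a.natDegree ≤ c) : HB c (C a) := by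
  intro j
  rw [coeff_C]
  split_ifs <;> simp [h]

lemma HB_mono {c c' : ℕ} (h : c ≤ c') {p : Polynomial (Polynomial A)} (hp : HB c p) : HB c' p :=
  fun j => le_trans (hp j) h

lemma HB_add {c : ℕ} {p q : Polynomial (Polynomial A)} (hp : HB c p) (hq : HB c q) :
    HB c (p + q) := by
  intro j
  rw [coeff_add]
  exact le_trans (natDegree_add_le _ _) (max_le (hp j) (hq j))

lemma HB_neg {c : ℕ} {p : Polynomial (Polynomial A)} (hp : HB c p) : HB c (-p) := by
  intro j
  rw [coeff_neg, natDegree_neg]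
  exact hp j

lemma HB_sub {c : ℕ} {p q : Polynomial (Polynomial A)} (hp : HB c p) (hq : HB c q) :
    HB c (p - q) := by
  rw [sub_eq_add_neg]; exact HB_add hp (HB_neg hq)

lemma HB_sum {c : ℕ} {ι : Type*} (s : Finset ι) (f : ι → Polynomial (Polynomial A))
    (h : ∀ i ∈ s, HB c (f i)) : HB c (∑ i ∈ s, f i) := by
  classical
  induction s using Finset.cons_induction with
  | empty => simpa using HB_zero c
  | cons a s ha ih =>
    rw [Finset.sum_cons]
    exact HB_add (h a (Finset.mem_cons_self a s)) (ih fun i hi => h i (Finset.mem_cons_of_mem hi))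

lemma HB_mul {c e : ℕ} {p q : Polynomial (Polynomial A)} (hp : HB c p) (hq : HB e q) :
    HB (c + e) (p * q) := by
  intro j
  rw [coeff_mul]
  apply le_trans (natDegree_sum_le_of_forall_le _ _ ?_) le_rfl
  intro ij hij
  exact le_trans natDegree_mul_le (add_le_add (hp ij.1) (hq ij.2))

lemma HB_prod {ι : Type*} (s : Finset ι) (f : ι → Polynomial (Polynomial A)) (c : ℕ)
    (h : ∀ i ∈ s, HB c (f i)) : HB (s.card * c) (∏ i ∈ s, f i) := by
  classical
  induction s using Finset.cons_induction with
  | empty => simpa using (show HB 0 (1 : Polynomial (Polynomial A)) from by rw [← C_1]; exact HB_C (by simp))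
  | cons a s ha ih =>
    rw [Finset.prod_cons]
    have hc : (Finset.cons a s ha).card * c = c + s.card * c := by rw [Finset.card_cons]; ring
    rw [hc]
    exact HB_mul (h a (Finset.mem_cons_self a s))
      (ih fun i hi => h i (Finset.mem_cons_of_mem hi))

lemma HB_zsmul {c : ℕ} (n : ℤˣ) {p : Polynomial (Polynomial A)} (hp : HB c p) : HB c (n • p) := by
  rcases Int.units_eq_one_or n with h | h <;> subst h
  · simpa using hp
  · intro j
    have : (-1 : ℤˣ) • p = -p := by
      simp [Units.smul_def]
    rw [this, coeff_neg, natDegree_neg]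
    exact hp j

lemma HB_det {k : ℕ} (M : Matrix (Fin k) (Fin k) (Polynomial (Polynomial A))) (c : ℕ)
    (h : ∀ i j, HB c (M i j)) : HB (k * c) M.det := by
  rw [Matrix.det_apply]
  apply HB_sum
  intro σ _
  apply HB_zsmul
  have := HB_prod Finset.univ (fun i => M (σ i) i) c (fun i _ => h _ _)
  simpa using this

end Stmt15

namespace Stmt15

section Val

variable {Ω : Type*} [Field Ω] (v : Ω → EReal)
variable (hv0 : v 0 = ⊤) (hbot : ∀ a, v a ≠ ⊥)
variable (hmul : ∀ a b, v (a * b) = v a + v b)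
variable (hadd : ∀ a b, min (v a) (v b) ≤ v (a + b))

include hbot hmul

lemma v_one (x : Ω) (hx : v x = (-1 : EReal)) : v 1 = 0 := by
  have h1 : v 1 = v 1 + v 1 := by rw [← hmul, one_mul]
  have hnt : v 1 ≠ ⊤ := by
    intro h
    have : v x = v (x * 1) := by rw [mul_one]
    rw [hmul, h, EReal.add_top_of_ne_bot (hbot x)] at this
    rw [hx] at this
    have h2 : ((-1 : EReal)) = ((-1 : ℝ) : EReal) := by norm_num
    rw [h2] at this
    exact EReal.coe_ne_top _ this
  set r := (v 1).toReal with hr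
  have hco : v 1 = (r : EReal) := (EReal.coe_toReal hnt (hbot 1)).symm
  rw [hco, ← EReal.coe_add, EReal.coe_eq_coe_iff] at h1
  rw [hco]
  norm_num
  linarith

variable (hv1 : v 1 = 0)
include hv1

lemma v_ne_top {x : Ω} (hx : x ≠ 0) : v x ≠ ⊤ := by
  intro h
  have := hmul x x⁻¹
  rw [mul_inv_cancel₀ hx, hv1, h, EReal.top_add_of_ne_bot (hbot x⁻¹)] at this
  exact absurd this.symm (by simp)

lemma v_neg [Nontrivial Ω] (x : Ω) : v (-x) = v x := by
  have hm1 : v (-1 : Ω) = 0 := by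
    have h1 : v ((-1 : Ω) * (-1)) = v (-1) + v (-1) := hmul _ _
    rw [neg_one_mul, neg_neg, hv1] at h1
    have hnt : v (-1 : Ω) ≠ ⊤ := v_ne_top v hbot hmul hv1 (by norm_num)
    set r := (v (-1 : Ω)).toReal with hr
    have hco : v (-1 : Ω) = (r : EReal) := (EReal.coe_toReal hnt (hbot _)).symm
    rw [hco, ← EReal.coe_add] at h1
    rw [hco]
    have : r + r = 0 := by exact_mod_cast h1.symm
    have : r = 0 := by linarith
    rw [this]; rfl
  calc v (-x) = v ((-1) * x) := by rw [neg_one_mul]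
  _ = v (-1) + v x := hmul _ _
  _ = v x := by rw [hm1, zero_add]

omit hbot in
lemma v_pow (x : Ω) (s : ℝ) (hx : v x = (s : EReal)) :
    ∀ k : ℕ, v (x ^ k) = (((k : ℝ) * s : ℝ) : EReal) := by
  intro k
  induction k with
  | zero => simp [hv1]
  | succ n ih =>
    rw [pow_succ, hmul, ih, hx, ← EReal.coe_add]
    congr 1
    push_cast
    ring

include hadd in
lemma v_add_eq {a b : Ω} (hlt : v b < v a) : v (a + b) = v b := by
  have le1 : v b ≤ v (a + b) := by
    have := hadd a b
    rwa [min_eq_right hlt.le] at this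
  have le2 : v (a + b) ≤ v b := by
    by_contra h
    push_neg at h
    have hb2 : v b = v ((a + b) + (-a)) := by congr 1; ring
    have := hadd (a + b) (-a)
    rw [← hb2] at this
    rcases min_le_iff.mp this with h1 | h1
    · exact absurd h1 (not_le.mpr h)
    · rw [v_neg v hbot hmul hv1 a] at h1
      exact absurd h1 (not_le.mpr hlt)
  exact le_antisymm le2 le1

omit hbot hmul hv1 in
include hv0 hadd in
lemma v_sum_ge {ι : Type*} (CC : EReal) (s : Finset ι) (f : ι → Ω)
    (h : ∀ i ∈ s, CC ≤ v (f i)) : CC ≤ v (∑ i ∈ s, f i) := by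
  classical
  induction s using Finset.cons_induction with
  | empty => simp [hv0]
  | cons a s ha ih =>
    rw [Finset.sum_cons]
    refine le_trans ?_ (hadd (f a) (∑ i ∈ s, f i))
    exact le_min (h a (Finset.mem_cons_self a s)) (ih fun i hi => h i (Finset.mem_cons_of_mem hi))

end Val

end Stmt15

namespace Stmt15

section RootBound

variable {Fq Ω : Type*} [Field Fq] [Field Ω] (v : Ω → EReal) (ψ : Polynomial Fq →+* Ω)

lemma root_bound
    (hv0 : v 0 = ⊤) (hbot : ∀ a, v a ≠ ⊥) (hmul : ∀ a b, v (a * b) = v a + v b)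
    (hadd : ∀ a b, min (v a) (v b) ≤ v (a + b)) (hv1 : v 1 = 0)
    (hψ : ∀ f : Polynomial Fq, f ≠ 0 → v (ψ f) = ((-(f.natDegree : ℝ) : ℝ) : EReal))
    (R : Polynomial (Polynomial Fq)) (hR : R ≠ 0) (H : ℕ)
    (hH : ∀ j, (R.coeff j).natDegree ≤ H)
    (y : Ω) (hy : (R.map ψ).eval y = 0) :
    -(v y) ≤ ((H : ℝ) : EReal) := by
  have hψ0 : ∀ f : Polynomial Fq, f ≠ 0 → ψ f ≠ 0 := by
    intro f hf h0
    have := hψ f hf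
    rw [h0, hv0] at this
    exact EReal.coe_ne_top _ this.symm
  set n := R.natDegree with hn
  by_cases hn0 : n = 0
  · exfalso
    have hRC : R = C (R.coeff 0) := eq_C_of_natDegree_eq_zero hn0
    have hc0 : R.coeff 0 ≠ 0 := by
      intro h; apply hR; rw [hRC, h, map_zero]
    rw [hRC] at hy
    simp only [map_C, eval_C] at hy
    exact hψ0 _ hc0 hy
  by_cases hy0 : y = 0
  · rw [hy0, hv0]
    simp
  have hyt : v y ≠ ⊤ := v_ne_top v hbot hmul hv1 hy0
  set r := (v y).toReal with hrdef
  have hvy : v y = (r : EReal) := (EReal.coe_toReal hyt (hbot y)).symm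
  by_cases hr : 0 ≤ r
  · rw [hvy, ← EReal.coe_neg, EReal.coe_le_coe_iff]
    have : (0:ℝ) ≤ (H : ℝ) := Nat.cast_nonneg H
    linarith
  push_neg at hr
  -- the polynomial identity
  have heval : ∑ j ∈ range (n + 1), ψ (R.coeff j) * y ^ j = 0 := by
    have h1 : (R.map ψ).natDegree < n + 1 := lt_of_le_of_lt natDegree_map_le (by omega)
    have h2 := eval_eq_sum_range' h1 y
    rw [hy] at h2
    have h3 : ∀ j ∈ range (n+1), (R.map ψ).coeff j * y ^ j = ψ (R.coeff j) * y ^ j := by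
      intro j _
      rw [coeff_map]
    rw [Finset.sum_congr rfl h3] at h2
    exact h2.symm
  rw [Finset.sum_range_succ] at heval
  have hlead : ψ (R.coeff n) * y ^ n = - ∑ j ∈ range n, ψ (R.coeff j) * y ^ j := by
    linear_combination heval
  have han : R.coeff n ≠ 0 := by
    rw [hn]; exact leadingCoeff_ne_zero.mpr hR
  -- value of LHS
  have hLHS : v (ψ (R.coeff n) * y ^ n) =
      (((-( (R.coeff n).natDegree : ℝ)) + (n : ℝ) * r : ℝ) : EReal) := by
    rw [hmul, hψ _ han, v_pow v hmul hv1 y r hvy n, ← EReal.coe_add]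
  -- value of RHS
  set CC : ℝ := -(H : ℝ) + ((n : ℝ) - 1) * r with hCC
  have hRHS : ((CC : ℝ) : EReal) ≤ v (∑ j ∈ range n, ψ (R.coeff j) * y ^ j) := by
    apply v_sum_ge v hv0 hadd
    intro j hj
    simp only [Finset.mem_range] at hj
    by_cases haj : R.coeff j = 0
    · rw [haj, map_zero, zero_mul, hv0]
      exact le_top
    · rw [hmul, hψ _ haj, v_pow v hmul hv1 y r hvy j, ← EReal.coe_add,
        EReal.coe_le_coe_iff]
      have e1 : -(((R.coeff j).natDegree : ℝ)) ≥ -(H : ℝ) := by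
        have := hH j
        have : ((R.coeff j).natDegree : ℝ) ≤ (H : ℝ) := by exact_mod_cast this
        linarith
      have e2 : ((n : ℝ) - 1) * r ≤ (j : ℝ) * r := by
        apply mul_le_mul_of_nonpos_right _ hr.le
        have : (j : ℝ) ≤ (n : ℝ) - 1 := by
          have : (j : ℝ) + 1 ≤ (n : ℝ) := by exact_mod_cast hj
          linarith
        exact this
      linarith
  have hvneg : v (- ∑ j ∈ range n, ψ (R.coeff j) * y ^ j)
      = v (∑ j ∈ range n, ψ (R.coeff j) * y ^ j) := v_neg v hbot hmul hv1 _
  have hLHS2 : (((-(((R.coeff n).natDegree : ℝ))) + (n : ℝ) * r : ℝ) : EReal)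
      = v (∑ j ∈ range n, ψ (R.coeff j) * y ^ j) := by
    rw [← hvneg, ← hlead, hLHS]
  have hfinal : CC ≤ -(((R.coeff n).natDegree : ℝ)) + (n : ℝ) * r := by
    rw [← EReal.coe_le_coe_iff, hLHS2]
    exact hRHS
  -- conclude
  rw [hvy, ← EReal.coe_neg, EReal.coe_le_coe_iff]
  have hn1 : (1 : ℝ) ≤ (n : ℝ) := by exact_mod_cast Nat.one_le_iff_ne_zero.mpr hn0
  have hdeg : (0:ℝ) ≤ (((R.coeff n).natDegree : ℝ)) := Nat.cast_nonneg _
  rw [hCC] at hfinal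
  nlinarith [hfinal]

end RootBound

end Stmt15

namespace Stmt15

section VPsi

variable {Fq Ω : Type*} [Field Fq] [Fintype Fq] [Field Ω]
variable (v : Ω → EReal) (ψ : Polynomial Fq →+* Ω)

lemma v_psi
    (hv0 : v 0 = ⊤) (hbot : ∀ a, v a ≠ ⊥) (hmul : ∀ a b, v (a * b) = v a + v b)
    (hadd : ∀ a b, min (v a) (v b) ≤ v (a + b)) (hv1 : v 1 = 0)
    (hinj : Function.Injective ψ)
    (hψX : v (ψ (X : Polynomial Fq)) = ((-1 : ℝ) : EReal)) :
    ∀ f : Polynomial Fq, f ≠ 0 → v (ψ f) = ((-(f.natDegree : ℝ) : ℝ) : EReal) := by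
  have hψ0 : ∀ g : Polynomial Fq, g ≠ 0 → ψ g ≠ 0 := by
    intro g hg h0
    exact hg (hinj (by rw [h0, map_zero]))
  have hC : ∀ c : Fq, c ≠ 0 → v (ψ (C c)) = ((0 : ℝ) : EReal) := by
    intro c hc
    set u := ψ (C c) with hu
    have hu0 : u ≠ 0 := hψ0 _ (by simp [hc])
    set e := Fintype.card Fq - 1 with he
    have he1 : 1 ≤ e := by
      have := Fintype.one_lt_card (α := Fq)
      omega
    have hue : u ^ e = 1 := by
      rw [hu, ← map_pow, ← C_pow, FiniteField.pow_card_sub_one_eq_one c hc, map_one, map_one]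
    have hut : v u ≠ ⊤ := v_ne_top v hbot hmul hv1 hu0
    set s := (v u).toReal with hs
    have hvu : v u = (s : EReal) := (EReal.coe_toReal hut (hbot u)).symm
    have h2 : v (u ^ e) = (((e : ℝ) * s : ℝ) : EReal) := v_pow v hmul hv1 u s hvu e
    rw [hue, hv1] at h2
    have h3 : (0 : ℝ) = (e : ℝ) * s := by exact_mod_cast h2
    have he0 : (e : ℝ) ≠ 0 := by
      have : (1:ℝ) ≤ (e:ℝ) := by exact_mod_cast he1
      linarith
    have hs0 : s = 0 := by
      have := mul_eq_zero.mp h3.symm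
      rcases this with h | h
      · exact absurd h he0
      · exact h
    rw [hvu, hs0]
  have key : ∀ N : ℕ, ∀ f : Polynomial Fq, f ≠ 0 → f.natDegree = N →
      v (ψ f) = ((-(f.natDegree : ℝ) : ℝ) : EReal) := by
    intro N
    induction N using Nat.strong_induction_on with
    | _ N ih =>
      intro f hf hdeg
      have hlc : f.leadingCoeff ≠ 0 := leadingCoeff_ne_zero.mpr hf
      have hXn : v (ψ (C f.leadingCoeff * X ^ N)) = ((-(N : ℝ) : ℝ) : EReal) := by
        rw [map_mul, map_pow, hmul, hC _ hlc, v_pow v hmul hv1 _ (-1) hψX N, ← EReal.coe_add]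
        congr 1
        ring
      by_cases hEL : f.eraseLead = 0
      · have hfm : f = C f.leadingCoeff * X ^ N := by
          conv_lhs => rw [← eraseLead_add_C_mul_X_pow f]
          rw [hEL, zero_add, hdeg]
        rw [hdeg, hfm]
        exact hXn
      · have hN0 : N ≠ 0 := by
          intro h
          apply hEL
          have : f = C (f.coeff 0) := eq_C_of_natDegree_eq_zero (by omega)
          rw [this, eraseLead_C]
        have hdEL : f.eraseLead.natDegree < N :=
          lt_of_le_of_lt (le_trans (eraseLead_natDegree_le f) (by omega : f.natDegree - 1 ≤ N - 1))
            (by omega)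
        have hIH := ih _ hdEL f.eraseLead hEL rfl
        have hlt : v (ψ (C f.leadingCoeff * X ^ N)) < v (ψ f.eraseLead) := by
          rw [hXn, hIH, EReal.coe_lt_coe_iff]
          have : (f.eraseLead.natDegree : ℝ) < (N : ℝ) := by exact_mod_cast hdEL
          linarith
        have hsplit : v (ψ f) = v (ψ (C f.leadingCoeff * X ^ N)) := by
          conv_lhs => rw [← eraseLead_add_C_mul_X_pow f, hdeg]
          rw [map_add]
          exact v_add_eq v hbot hmul hadd hv1 hlt
        rw [hsplit, hXn, hdeg]
  intro f hf
  exact key f.natDegree f hf rfl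

end VPsi

end Stmt15

namespace Stmt15

variable {A : Type*} [CommRing A]

lemma HB_X_pow (c i : ℕ) : HB c ((X : Polynomial (Polynomial A)) ^ i) := by
  intro j
  rw [coeff_X_pow]
  split_ifs <;> simp

lemma construct_R {Fq Ω : Type*} [Field Fq] [Field Ω] [IsAlgClosed Ω]
    (ψ : Polynomial Fq →+* Ω) (hinj : Function.Injective ψ)
    (m e n₁ N h : ℕ) (hm : 1 ≤ m) (he : 1 ≤ e)
    (b : ℕ → Polynomial (Polynomial Fq))
    (hbdeg : ∀ i, i ≤ m → (b i).natDegree ≤ N)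
    (hbht : ∀ i, i ≤ m → ∀ j, ((b i).coeff j).natDegree ≤ h)
    (Pα : Polynomial (Polynomial Fq)) (hPα0 : Pα ≠ 0) (hPdeg : Pα.natDegree = n₁)
    (h1 : 1 ≤ n₁) (hPht : ∀ j, (Pα.coeff j).natDegree ≤ h)
    (α g : Ω) (hroot : (Pα.map ψ).eval α = 0)
    (hγ : ∀ γ : Ω, (Pα.map ψ).eval γ = 0 → ((b m).map ψ).eval (γ ^ e) ≠ 0)
    (halg : ((b m).map ψ).eval (α ^ e) * g ^ m
      = ∑ i ∈ range m, ((b i).map ψ).eval (α ^ e) * g ^ i) :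
    ∃ R : Polynomial (Polynomial Fq), R ≠ 0 ∧ Polynomial.eval₂ ψ g R = 0 ∧
      HB ((n₁ + (N * e + 1)) * h) R := by
  classical
  have : Infinite Ω := Infinite.of_injective ψ hinj
  set n₂ := N * e + 1 with hn₂
  set Pt : Polynomial (Polynomial (Polynomial Fq)) := Pα.map Polynomial.C with hPtdef
  set lift : ℕ → Polynomial (Polynomial (Polynomial Fq)) :=
    fun i => ((b i).map Polynomial.C).comp (X ^ e) with hliftdef
  set Qt : Polynomial (Polynomial (Polynomial Fq)) :=
    (∑ i ∈ range m, Polynomial.C ((X : Polynomial (Polynomial Fq)) ^ i) * lift i)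
      - Polynomial.C ((X : Polynomial (Polynomial Fq)) ^ m) * lift m with hQtdef
  set M := sylMat n₁ n₂ Pt Qt with hMdef
  -- degree bounds
  have hliftdeg : ∀ i, i ≤ m → (lift i).natDegree ≤ N * e := by
    intro i hi
    refine le_trans natDegree_comp_le ?_
    refine Nat.mul_le_mul (le_trans natDegree_map_le (hbdeg i hi)) ?_
    rw [natDegree_X_pow]
  have hQdeg : Qt.natDegree ≤ n₂ := by
    rw [hQtdef]
    refine le_trans (natDegree_sub_le _ _) (max_le ?_ ?_)
    · apply natDegree_sum_le_of_forall_le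
      intro i hi
      simp only [Finset.mem_range] at hi
      refine le_trans natDegree_mul_le ?_
      rw [natDegree_C, zero_add]
      exact le_trans (hliftdeg i (by omega)) (by omega)
    · refine le_trans natDegree_mul_le ?_
      rw [natDegree_C, zero_add]
      exact le_trans (hliftdeg m le_rfl) (by omega)
  have hPtdeg : Pt.natDegree ≤ n₁ := le_trans natDegree_map_le hPdeg.le
  -- specialization
  have hPt : ∀ x : Ω, Pt.map (eval₂RingHom ψ x) = Pα.map ψ := by
    intro x
    rw [hPtdef, Polynomial.map_map]
    congr 1
    exact RingHom.ext fun a => by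
      simp [RingHom.comp_apply, coe_eval₂RingHom]
  have hlift : ∀ (x : Ω) (i : ℕ),
      (lift i).map (eval₂RingHom ψ x) = ((b i).map ψ).comp (X ^ e) := by
    intro x i
    rw [hliftdef]
    simp only
    rw [Polynomial.map_comp, Polynomial.map_map, Polynomial.map_pow, map_X]
    have hcomp : (eval₂RingHom ψ x).comp (Polynomial.C : Polynomial Fq →+* Polynomial (Polynomial Fq)) = ψ :=
      RingHom.ext fun a => by simp [RingHom.comp_apply, coe_eval₂RingHom]
    rw [hcomp]
  have hQt : ∀ x : Ω, Qt.map (eval₂RingHom ψ x)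
      = (∑ i ∈ range m, C (x ^ i) * ((b i).map ψ).comp (X ^ e))
        - C (x ^ m) * ((b m).map ψ).comp (X ^ e) := by
    intro x
    rw [hQtdef, Polynomial.map_sub, Polynomial.map_sum]
    congr 1
    · apply Finset.sum_congr rfl
      intro i _
      rw [Polynomial.map_mul, map_C, hlift x i]
      congr 1
      simp [coe_eval₂RingHom]
    · rw [Polynomial.map_mul, map_C, hlift x m]
      congr 1
      simp [coe_eval₂RingHom]
  have hQeval : ∀ (x γ : Ω), (Qt.map (eval₂RingHom ψ x)).eval γ
      = (∑ i ∈ range m, x ^ i * ((b i).map ψ).eval (γ ^ e))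
        - x ^ m * ((b m).map ψ).eval (γ ^ e) := by
    intro x γ
    rw [hQt x]
    simp [eval_finset_sum, eval_comp]
  have hdet : ∀ x : Ω, Polynomial.eval₂ ψ x M.det
      = (sylMat n₁ n₂ (Pt.map (eval₂RingHom ψ x)) (Qt.map (eval₂RingHom ψ x))).det := by
    intro x
    have h1' := RingHom.map_det (eval₂RingHom ψ x) M
    rw [coe_eval₂RingHom] at h1'
    rw [h1']
    congr 1
    rw [hMdef]
    have := sylMat_map (eval₂RingHom ψ x) n₁ n₂ Pt Qt
    rw [← this]
    rfl
  refine ⟨M.det, ?_, ?_, ?_⟩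
  -- nonvanishing
  · set q' : Ω → Polynomial Ω := fun γ =>
      (∑ i ∈ range m, C (((b i).map ψ).eval (γ ^ e)) * X ^ i)
        - C (((b m).map ψ).eval (γ ^ e)) * X ^ m with hq'def
    have hq'coeff : ∀ γ, (q' γ).coeff m = -(((b m).map ψ).eval (γ ^ e)) := by
      intro γ
      rw [hq'def]
      simp only [coeff_sub, finset_sum_coeff, coeff_C_mul, coeff_X_pow]
      have h1 : ∀ i ∈ range m, ((b i).map ψ).eval (γ ^ e) * (if m = i then (1:Ω) else 0) = 0 := by
        intro i hi
        simp only [Finset.mem_range] at hi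
        rw [if_neg (by omega), mul_zero]
      rw [Finset.sum_eq_zero h1]
      simp
    have hq'ne : ∀ γ, (Pα.map ψ).eval γ = 0 → q' γ ≠ 0 := by
      intro γ hγ0 hq0
      have := hq'coeff γ
      rw [hq0, coeff_zero] at this
      exact hγ γ hγ0 (neg_eq_zero.mp this.symm)
    have hq'eval : ∀ (γ x' : Ω), (q' γ).eval x' = (Qt.map (eval₂RingHom ψ x')).eval γ := by
      intro γ x'
      rw [hQeval x' γ, hq'def]
      simp only [eval_sub, eval_finset_sum, eval_mul, eval_C, eval_pow, eval_X]
      congr 1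
      · exact Finset.sum_congr rfl fun i _ => mul_comm _ _
      · exact mul_comm _ _
    have hPmapne : Pα.map ψ ≠ 0 := (Polynomial.map_ne_zero_iff hinj).mpr hPα0
    set S : Finset Ω := ((Pα.map ψ).roots.toFinset).biUnion
      (fun γ => (q' γ).roots.toFinset) with hSdef
    obtain ⟨x, hx⟩ := Infinite.exists_notMem_finset S
    have hcop : IsCoprime (Pt.map (eval₂RingHom ψ x)) (Qt.map (eval₂RingHom ψ x)) := by
      rw [← EuclideanDomain.gcd_isUnit_iff]
      by_contra hnu
      set gg := EuclideanDomain.gcd (Pt.map (eval₂RingHom ψ x)) (Qt.map (eval₂RingHom ψ x))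
        with hggdef
      have hg0 : gg ≠ 0 := by
        rw [hggdef, Ne, EuclideanDomain.gcd_eq_zero_iff]
        rintro ⟨h1', _⟩
        rw [hPt x] at h1'
        exact hPmapne h1'
      have hdeg0 : gg.degree ≠ 0 := fun hh => hnu (isUnit_iff_degree_eq_zero.mpr hh)
      obtain ⟨γ, hγroot⟩ := IsAlgClosed.exists_root gg hdeg0
      have hd1 : (Pt.map (eval₂RingHom ψ x)).eval γ = 0 := by
        obtain ⟨s', hs'⟩ := EuclideanDomain.gcd_dvd_left (Pt.map (eval₂RingHom ψ x))
          (Qt.map (eval₂RingHom ψ x))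
        rw [hs', eval_mul, ← hggdef, hγroot, zero_mul]
      have hd2 : (Qt.map (eval₂RingHom ψ x)).eval γ = 0 := by
        obtain ⟨s', hs'⟩ := EuclideanDomain.gcd_dvd_right (Pt.map (eval₂RingHom ψ x))
          (Qt.map (eval₂RingHom ψ x))
        rw [hs', eval_mul, ← hggdef, hγroot, zero_mul]
      have hγP : (Pα.map ψ).eval γ = 0 := by rw [← hPt x]; exact hd1
      have hq0 : (q' γ).eval x = 0 := by rw [hq'eval γ x]; exact hd2
      apply hx
      rw [hSdef, Finset.mem_biUnion]
      refine ⟨γ, ?_, ?_⟩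
      · rw [Multiset.mem_toFinset, mem_roots hPmapne]
        exact hγP
      · rw [Multiset.mem_toFinset, mem_roots (hq'ne γ hγP)]
        exact hq0
    have hPdegx : (Pt.map (eval₂RingHom ψ x)).natDegree = n₁ := by
      rw [hPt x, natDegree_map_eq_of_injective hinj]
      exact hPdeg
    have hP0x : Pt.map (eval₂RingHom ψ x) ≠ 0 := by rw [hPt x]; exact hPmapne
    have hdetne := det_sylMat_ne_zero hPdegx h1 hP0x
      (le_trans natDegree_map_le hQdeg) hcop
    intro hMz
    apply hdetne
    rw [← hdet x, hMz, eval₂_zero]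
  -- vanishing at g
  · rw [hdet g]
    apply det_sylMat_eq_zero (x := α)
    · rw [hPt g]
      exact le_trans natDegree_map_le hPdeg.le
    · exact le_trans natDegree_map_le hQdeg
    · omega
    · rw [hPt g]; exact hroot
    · rw [hQeval g α, sub_eq_zero]
      calc ∑ i ∈ range m, g ^ i * ((b i).map ψ).eval (α ^ e)
          = ∑ i ∈ range m, ((b i).map ψ).eval (α ^ e) * g ^ i := by
            exact Finset.sum_congr rfl fun i _ => mul_comm _ _
        _ = ((b m).map ψ).eval (α ^ e) * g ^ m := halg.symm
        _ = g ^ m * ((b m).map ψ).eval (α ^ e) := mul_comm _ _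
  -- height bound
  · have hHBPt : ∀ l, HB h (Pt.coeff l) := by
      intro l
      rw [hPtdef, coeff_map]
      exact HB_C (hPht l)
    have hHBlift : ∀ i, i ≤ m → ∀ l, HB h ((lift i).coeff l) := by
      intro i hi l
      rw [hliftdef]
      simp only
      rw [comp_eq_sum_left, Polynomial.sum_def, finset_sum_coeff]
      apply HB_sum
      intro n _
      have hxp : ((X : Polynomial (Polynomial (Polynomial Fq))) ^ e) ^ n = X ^ (e * n) := by
        rw [← pow_mul]
      rw [hxp, coeff_C_mul, coeff_X_pow, coeff_map]
      split_ifs with hl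
      · rw [mul_one]
        exact HB_C (hbht i hi n)
      · rw [mul_zero]
        exact HB_zero h
    have hHBQt : ∀ l, HB h (Qt.coeff l) := by
      intro l
      rw [hQtdef, coeff_sub, finset_sum_coeff]
      apply HB_sub
      · apply HB_sum
        intro i hi
        simp only [Finset.mem_range] at hi
        rw [coeff_C_mul]
        have := HB_mul (HB_X_pow 0 i) (hHBlift i (by omega) l)
        rwa [zero_add] at this
      · rw [coeff_C_mul]
        have := HB_mul (HB_X_pow 0 m) (hHBlift m le_rfl l)
        rwa [zero_add] at this
    have hent : ∀ i j, HB h (M i j) := by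
      intro i j
      rw [hMdef, sylMat]
      simp only [Matrix.of_apply]
      split_ifs
      · exact hHBPt _
      · exact HB_zero h
      · exact hHBQt _
      · exact HB_zero h
    exact HB_det M h hent

end Stmt15

/-- The house of `x`: the supremum of `−v(y)` over the conjugates `y` of `x`
over `k` (the roots in `Ω` of the minimal polynomial of `x`). -/
noncomputable def house (k : Type*) {Ω : Type*} [Field k] [Field Ω] [Algebra k Ω]
    (v : Ω → EReal) (x : Ω) : EReal :=
  sSup {r : EReal | ∃ y ∈ (minpoly k x).aroots Ω, r = -v y}

theorem stmt_15 {Fq Ω : Type*} [Field Fq] [Fintype Fq] [Field Ω]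
    [Algebra (RatFunc Fq) Ω] [IsAlgClosed Ω] [Algebra.IsAlgebraic (RatFunc Fq) Ω]
    [Algebra (Polynomial Fq) Ω] [IsScalarTower (Polynomial Fq) (RatFunc Fq) Ω]
    (v : Ω → EReal)
    (hv0 : v 0 = ⊤)
    (hv_ne_bot : ∀ a, v a ≠ ⊥)
    (hv_mul : ∀ a b, v (a * b) = v a + v b)
    (hv_add : ∀ a b, min (v a) (v b) ≤ v (a + b))
    (hvθ : v (algebraMap (RatFunc Fq) Ω RatFunc.X) = (-1 : EReal))
    (α : Ω) (hα : 0 < v α) (d : ℕ) (hd : 2 ≤ d)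
    (m : ℕ) (hm : 1 ≤ m) (b : ℕ → Polynomial (Polynomial Fq)) (hbm : b m ≠ 0)
    (G : ℕ → Ω)
    (hnz : ∀ t : ℕ,
      Polynomial.eval (α ^ d ^ t) ((b m).map (algebraMap (Polynomial Fq) Ω)) ≠ 0)
    (halg : ∀ t : ℕ,
      Polynomial.eval (α ^ d ^ t) ((b m).map (algebraMap (Polynomial Fq) Ω)) * G t ^ m =
        ∑ i ∈ Finset.range m,
          Polynomial.eval (α ^ d ^ t) ((b i).map (algebraMap (Polynomial Fq) Ω)) * G t ^ i) :
    ∃ c₁ c₂ : ℝ, 0 < c₁ ∧ 0 < c₂ ∧ ∀ t : ℕ,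
      (∃ D : Polynomial Fq, D ≠ 0 ∧
        IsIntegral (Polynomial Fq) (algebraMap (Polynomial Fq) Ω D * G t) ∧
        (D.natDegree : ℝ) ≤ c₁ * (d : ℝ) ^ t) ∧
      house (RatFunc Fq) v (G t) ≤ ((c₂ * (d : ℝ) ^ t : ℝ) : EReal) := by
  classical
  -- basic valuation facts
  have hv1 : v 1 = 0 := Stmt15.v_one v hv_ne_bot hv_mul _ hvθ
  have hinj : Function.Injective (algebraMap (Polynomial Fq) Ω) := by
    rw [IsScalarTower.algebraMap_eq (Polynomial Fq) (RatFunc Fq) Ω, RingHom.coe_comp]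
    exact Function.Injective.comp ((algebraMap (RatFunc Fq) Ω).injective)
      (IsFractionRing.injective (Polynomial Fq) (RatFunc Fq))
  have hψX : v (algebraMap (Polynomial Fq) Ω X) = ((-1 : ℝ) : EReal) := by
    rw [IsScalarTower.algebraMap_apply (Polynomial Fq) (RatFunc Fq) Ω, RatFunc.algebraMap_X,
      show ((-1 : ℝ) : EReal) = (-1 : EReal) by norm_num]
    exact hvθ
  have hψdeg := Stmt15.v_psi v (algebraMap (Polynomial Fq) Ω) hv0 hv_ne_bot hv_mul hv_add hv1
    hinj hψX
  -- the minimal polynomial of α, with denominators cleared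
  have hαint : IsIntegral (RatFunc Fq) α := (Algebra.IsAlgebraic.isAlgebraic α).isIntegral
  set pm := minpoly (RatFunc Fq) α with hpmdef
  have hirr : Irreducible pm := minpoly.irreducible hαint
  have hmonic : pm.Monic := minpoly.monic hαint
  have hpm0 : pm ≠ 0 := hmonic.ne_zero
  set Pα := IsLocalization.integerNormalization (nonZeroDivisors (Polynomial Fq)) pm with hPαdef
  obtain ⟨c, hc⟩ :=
    IsLocalization.integerNormalization_map_to_map (nonZeroDivisors (Polynomial Fq)) pm
  have hc0 : (c : Polynomial Fq) ≠ 0 := nonZeroDivisors.coe_ne_zero c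
  have hcK0 : algebraMap (Polynomial Fq) (RatFunc Fq) (c : Polynomial Fq) ≠ 0 := by
    intro h
    exact hc0 (IsFractionRing.injective (Polynomial Fq) (RatFunc Fq) (by rw [h, map_zero]))
  have hmapPα : Pα.map (algebraMap (Polynomial Fq) (RatFunc Fq))
      = Polynomial.C (algebraMap (Polynomial Fq) (RatFunc Fq) (c : Polynomial Fq)) * pm := by
    rw [hc, ← algebraMap_smul (RatFunc Fq) ((c : Polynomial Fq)) pm, smul_eq_C_mul]
  have hPα0 : Pα ≠ 0 := by
    intro h
    rw [h, Polynomial.map_zero] at hmapPα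
    rcases mul_eq_zero.mp hmapPα.symm with h' | h'
    · exact hcK0 (Polynomial.C_eq_zero.mp h')
    · exact hpm0 h'
  set n₁ := Pα.natDegree with hn₁def
  have hn₁pm : n₁ = pm.natDegree := by
    have h1 : (Pα.map (algebraMap (Polynomial Fq) (RatFunc Fq))).natDegree = n₁ :=
      natDegree_map_eq_of_injective (IsFractionRing.injective (Polynomial Fq) (RatFunc Fq)) _
    rw [hmapPα, natDegree_mul (fun h' => hcK0 (Polynomial.C_eq_zero.mp h')) hpm0,
      natDegree_C, zero_add] at h1
    exact h1.symm
  have h1n₁ : 1 ≤ n₁ := by rw [hn₁pm]; exact minpoly.natDegree_pos hαint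
  -- the Ω-version of Pα, and its roots
  have hsplitmap : Pα.map (algebraMap (Polynomial Fq) Ω)
      = Polynomial.C (algebraMap (RatFunc Fq) Ω (algebraMap (Polynomial Fq) (RatFunc Fq) (c : Polynomial Fq)))
        * pm.map (algebraMap (RatFunc Fq) Ω) := by
    rw [IsScalarTower.algebraMap_eq (Polynomial Fq) (RatFunc Fq) Ω, ← Polynomial.map_map,
      hmapPα, Polynomial.map_mul, map_C]
  have hrootPα : (Pα.map (algebraMap (Polynomial Fq) Ω)).eval α = 0 := by
    rw [hsplitmap, eval_mul, eval_C]
    have : (pm.map (algebraMap (RatFunc Fq) Ω)).eval α = 0 := by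
      rw [eval_map, ← aeval_def, minpoly.aeval]
    rw [this, mul_zero]
  have hrootpm : ∀ γ : Ω, (Pα.map (algebraMap (Polynomial Fq) Ω)).eval γ = 0 →
      Polynomial.aeval γ pm = 0 := by
    intro γ hγ0
    rw [hsplitmap, eval_mul, eval_C] at hγ0
    rcases mul_eq_zero.mp hγ0 with h' | h'
    · exact absurd h' ((map_ne_zero_iff _ ((algebraMap (RatFunc Fq) Ω).injective)).mpr hcK0)
    · rw [aeval_def, ← eval_map]
      exact h'
  -- no root of Pα kills the leading coefficient polynomial
  have hγt : ∀ (t : ℕ) (γ : Ω), (Pα.map (algebraMap (Polynomial Fq) Ω)).eval γ = 0 →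
      ((b m).map (algebraMap (Polynomial Fq) Ω)).eval (γ ^ d ^ t) ≠ 0 := by
    intro t γ hγ0 hbad
    have hpmγ : Polynomial.aeval γ pm = 0 := hrootpm γ hγ0
    have hpmmin : pm = minpoly (RatFunc Fq) γ :=
      minpoly.eq_of_irreducible_of_monic hirr hpmγ hmonic
    set W : Polynomial (RatFunc Fq) :=
      ((b m).map (algebraMap (Polynomial Fq) (RatFunc Fq))).comp (X ^ d ^ t) with hWdef
    have hWeval : ∀ x : Ω, Polynomial.aeval x W
        = ((b m).map (algebraMap (Polynomial Fq) Ω)).eval (x ^ d ^ t) := by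
      intro x
      rw [hWdef, aeval_def, ← eval_map, Polynomial.map_comp, Polynomial.map_map,
        Polynomial.map_pow, map_X, eval_comp, eval_pow, eval_X,
        ← IsScalarTower.algebraMap_eq (Polynomial Fq) (RatFunc Fq) Ω]
    have hWγ : Polynomial.aeval γ W = 0 := by rw [hWeval]; exact hbad
    have hdvd : pm ∣ W := by rw [hpmmin]; exact minpoly.dvd (RatFunc Fq) γ hWγ
    obtain ⟨s, hs⟩ := hdvd
    have hWα : Polynomial.aeval α W = 0 := by
      rw [hs, map_mul, hpmdef, minpoly.aeval, zero_mul]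
    rw [hWeval α] at hWα
    exact hnz t hWα
  -- heights and degrees
  set N := (range (m + 1)).sup (fun i => (b i).natDegree) with hNdef
  have hbdeg : ∀ i, i ≤ m → (b i).natDegree ≤ N := by
    intro i hi
    exact Finset.le_sup (f := fun i => (b i).natDegree) (Finset.mem_range.mpr (by omega))
  set h₁ := (range (n₁ + 1)).sup (fun j => (Pα.coeff j).natDegree) with hh₁def
  have hPht : ∀ j, (Pα.coeff j).natDegree ≤ h₁ := by
    intro j
    by_cases hj : j ≤ n₁
    · exact Finset.le_sup (f := fun j => (Pα.coeff j).natDegree) (Finset.mem_range.mpr (by omega))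
    · rw [coeff_eq_zero_of_natDegree_lt (by omega)]; simp
  set h₂ := (range (m + 1)).sup
    (fun i => (range ((b i).natDegree + 1)).sup (fun j => ((b i).coeff j).natDegree)) with hh₂def
  have hbht : ∀ i, i ≤ m → ∀ j, ((b i).coeff j).natDegree ≤ h₂ := by
    intro i hi j
    by_cases hj : j ≤ (b i).natDegree
    · exact le_trans
        (Finset.le_sup (f := fun j => ((b i).coeff j).natDegree)
          (Finset.mem_range.mpr (by omega)))
        (Finset.le_sup
          (f := fun i => (range ((b i).natDegree + 1)).sup (fun j => ((b i).coeff j).natDegree))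
          (Finset.mem_range.mpr (by omega)))
    · rw [coeff_eq_zero_of_natDegree_lt (by omega)]; simp
  set hh := max h₁ h₂ with hhdef
  set CB := (n₁ + N + 1) * (hh + 1) with hCBdef
  have hCBpos : 0 < CB := Nat.mul_pos (by omega) (by omega)
  refine ⟨(CB : ℝ), (CB : ℝ), by exact_mod_cast hCBpos, by exact_mod_cast hCBpos, fun t => ?_⟩
  -- apply the construction at level t
  set e := d ^ t with hedef
  have he1 : 1 ≤ e := Nat.one_le_pow t d (by omega)
  obtain ⟨R, hR0, hReval, hRHB⟩ := Stmt15.construct_R (algebraMap (Polynomial Fq) Ω) hinj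
    m e n₁ N hh hm he1 b hbdeg (fun i hi j => le_trans (hbht i hi j) (le_max_right _ _))
    Pα hPα0 rfl h1n₁ (fun j => le_trans (hPht j) (le_max_left _ _)) α (G t)
    hrootPα (hγt t) (halg t)
  set H := (n₁ + (N * e + 1)) * hh with hHdef
  have hHle : H ≤ CB * e := by
    have hkey : n₁ + (N * e + 1) ≤ (n₁ + N + 1) * e := by
      have h1' : n₁ ≤ n₁ * e := Nat.le_mul_of_pos_right n₁ (by omega)
      have hexp : (n₁ + N + 1) * e = n₁ * e + N * e + e := by ring
      omega
    calc H = (n₁ + (N * e + 1)) * hh := rfl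
      _ ≤ ((n₁ + N + 1) * e) * (hh + 1) := Nat.mul_le_mul hkey (by omega)
      _ = CB * e := by ring
  have hHleR : (H : ℝ) ≤ (CB : ℝ) * (d : ℝ) ^ t := by
    have : ((CB * e : ℕ) : ℝ) = (CB : ℝ) * (d : ℝ) ^ t := by
      rw [hedef]; push_cast; ring
    rw [← this]
    exact_mod_cast hHle
  have haeval : Polynomial.aeval (G t) R = 0 := by rw [Polynomial.aeval_def]; exact hReval
  constructor
  -- part (i): denominator
  · refine ⟨R.leadingCoeff, leadingCoeff_ne_zero.mpr hR0, ?_, ?_⟩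
    · have := isIntegral_leadingCoeff_smul R (G t) haeval
      rwa [Algebra.smul_def] at this
    · refine le_trans ?_ hHleR
      exact_mod_cast hRHB R.natDegree
  -- part (ii): house
  · unfold house
    apply sSup_le
    rintro r ⟨y, hy, rfl⟩
    have hdvd : minpoly (RatFunc Fq) (G t) ∣ R.map (algebraMap (Polynomial Fq) (RatFunc Fq)) :=
      minpoly.dvd _ _ (by rw [aeval_map_algebraMap]; exact haeval)
    obtain ⟨s, hs⟩ := hdvd
    obtain ⟨hmne, hyaev⟩ := (Polynomial.mem_aroots).mp hy
    have hyroot : (R.map (algebraMap (Polynomial Fq) Ω)).eval y = 0 := by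
      rw [IsScalarTower.algebraMap_eq (Polynomial Fq) (RatFunc Fq) Ω, ← Polynomial.map_map,
        hs, Polynomial.map_mul, eval_mul]
      have : ((minpoly (RatFunc Fq) (G t)).map (algebraMap (RatFunc Fq) Ω)).eval y = 0 := by
        rw [eval_map, ← aeval_def]
        exact hyaev
      rw [this, zero_mul]
    have hrb := Stmt15.root_bound v (algebraMap (Polynomial Fq) Ω) hv0 hv_ne_bot hv_mul hv_add
      hv1 hψdeg R hR0 H hRHB y hyroot
    refine le_trans hrb ?_
    exact EReal.coe_le_coe_iff.mpr hHleR
end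

section
/- Let λ ∈ C_∞ with exp_C(λ) ∈ \overline{k}, where exp_C is the Carlitz exponential satisfying exp_C(θz) = θ·exp_C(z) + exp_C(z)^q. Set β = exp_C(λ) and suppose v_∞(β) ≤ −q/(q−1). If α ∈ C_∞ satisfies β = θα + α^q, then v_∞(α) = v_∞(β)/q > v_∞(β). Consequently, iterating, there exist n ∈ N and u ∈ \overline{k} with v_∞(u) > −q/(q−1) and exp_C(θ^n · Log_C(u)) = β. -/
/-!
STATEMENT 19: Let `β = exp_C(λ) ∈ k̄` with `v_∞(β) ≤ −q/(q−1)`.  If `α ∈ C_∞`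
satisfies `β = θα + α^q`, then `v_∞(α) = v_∞(β)/q > v_∞(β)`.

Core claim (as scoped by the context): in the non-archimedean valued field `C_∞`
with `v_∞(θ) = −1`, any solution `α` of `θα + α^q = β` with
`v_∞(β) ≤ −q/(q−1)` satisfies `v_∞(α) = v_∞(β)/q`.

Multiplicative formulation in a non-archimedean normed field: `1 < ‖θ‖`,
`‖θ‖^q ≤ ‖β‖^{q−1}` (i.e. `v_∞(β) ≤ −q/(q−1)` in `−log` units), and the
conclusions read `‖α‖^q = ‖β‖` (i.e. `v_∞(α) = v_∞(β)/q`) and `‖α‖ < ‖β‖`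
(i.e. `v_∞(α) > v_∞(β)`).
-/


theorem stmt_19 {C : Type*} [NormedField C]
    (hna : ∀ x y : C, ‖x + y‖ ≤ max ‖x‖ ‖y‖)
    (q : ℕ) (hq : 2 ≤ q)
    (θ α β : C) (hθ : 1 < ‖θ‖)
    (hβ : β = θ * α + α ^ q)
    (hvβ : ‖θ‖ ^ q ≤ ‖β‖ ^ (q - 1)) :
    ‖α‖ ^ q = ‖β‖ ∧ ‖α‖ < ‖β‖ := by
  set a := ‖α‖ with ha
  set t := ‖θ‖ with ht
  set b := ‖β‖ with hb
  have hq0 : q ≠ 0 := by omega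
  have hq1 : q - 1 ≠ 0 := by omega
  have ha0 : 0 ≤ a := norm_nonneg _
  have ht0 : (0:ℝ) < t := lt_trans one_pos hθ
  have htq : (1:ℝ) < t ^ q := one_lt_pow₀ hθ hq0
  have hb1 : 1 < b := by
    by_contra h
    push_neg at h
    have hb0 : 0 ≤ b := norm_nonneg _
    have : b ^ (q-1) ≤ 1 := pow_le_one₀ hb0 h
    linarith [le_trans hvβ this]
  have hb0 : (0:ℝ) < b := lt_trans one_pos hb1
  -- b ≤ max (t*a) (a^q)
  have hmax : b ≤ max (t * a) (a ^ q) := by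
    have := hna (θ * α) (α ^ q)
    rw [← hβ] at this
    simpa [norm_mul, norm_pow] using this
  -- ultrametric equality helper
  have ueq : ∀ x y : C, ‖x‖ < ‖y‖ → ‖x + y‖ = ‖y‖ := by
    intro x y h
    refine le_antisymm ((hna x y).trans (by simp [max_eq_right h.le])) ?_
    by_contra hlt
    push_neg at hlt
    have h2 := hna (x + y) (-x)
    have e : x + y + -x = y := by ring
    rw [e, norm_neg] at h2
    have : ‖y‖ < ‖y‖ := lt_of_le_of_lt h2 (max_lt hlt h)
    exact lt_irrefl _ this
  -- key claim: a ^ q = b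
  have key : a ^ q = b := by
    rcases lt_trichotomy (t * a) (a ^ q) with hlt | heq | hgt
    · -- b = a^q by ultrametric equality
      have : ‖θ * α + α ^ q‖ = ‖α ^ q‖ := by
        apply ueq
        simpa [norm_mul, norm_pow] using hlt
      rw [← hβ] at this
      simp only [norm_pow] at this
      exact this.symm
    · -- t*a = a^q : forces b = a^q
      have haq : a ^ q ≠ 0 := by
        intro h
        have : a = 0 := pow_eq_zero_iff hq0 |>.mp h
        rw [this] at hmax
        have : b ≤ 0 := by simpa [zero_pow hq0] using hmax
        linarith
      have ha0' : 0 < a := by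
        rcases ha0.lt_or_eq with h | h
        · exact h
        · exact absurd (by rw [← h]; simp [zero_pow hq0]) haq
      have hta : t = a ^ (q - 1) := by
        have : t * a = a ^ (q - 1) * a := by
          rw [heq, ← pow_succ]
          congr 1
          omega
        exact mul_right_cancel₀ (ne_of_gt ha0') this
      have h1 : (a ^ q) ^ (q - 1) ≤ b ^ (q - 1) := by
        calc (a ^ q) ^ (q - 1) = (a ^ (q-1)) ^ q := by
              rw [← pow_mul, ← pow_mul, Nat.mul_comm]
          _ = t ^ q := by rw [hta]
          _ ≤ b ^ (q - 1) := hvβ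
      have h2 : a ^ q ≤ b :=
        (pow_le_pow_iff_left₀ (pow_nonneg ha0 q) hb0.le hq1).mp h1
      have h3 : b ≤ a ^ q := by
        have := hmax
        rwa [heq, max_self] at this
      linarith
    · -- t*a > a^q : b = t*a, derive contradiction
      have hbta : b = t * a := by
        have : ‖α ^ q + θ * α‖ = ‖θ * α‖ := by
          apply ueq
          simpa [norm_mul, norm_pow] using hgt
        rw [add_comm] at this
        rw [← hβ] at this
        simpa [norm_mul] using this
      exfalso
      have h1 : b ^ q = t ^ q * a ^ q := by rw [hbta, mul_pow]
      have h2 : b ^ q ≤ b ^ (q - 1) * a ^ q := by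
        rw [h1]
        exact mul_le_mul_of_nonneg_right hvβ (pow_nonneg ha0 q)
      have h3 : b ^ (q - 1) * b ≤ b ^ (q - 1) * a ^ q := by
        have : b ^ (q - 1) * b = b ^ q := by
          rw [← pow_succ]; congr 1; omega
        rw [this]; exact h2
      have h4 : b ≤ a ^ q := (mul_le_mul_iff_right₀ (pow_pos hb0 (q-1))).mp h3
      have h5 : a ^ q < b := hbta ▸ hgt
      linarith
  refine ⟨key, ?_⟩
  -- a < b = a^q since a > 1
  have ha1 : 1 < a := by
    by_contra h
    push_neg at h
    have : a ^ q ≤ 1 := pow_le_one₀ ha0 h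
    linarith [key ▸ this]
  calc a = a ^ 1 := (pow_one a).symm
    _ < a ^ q := pow_lt_pow_right₀ ha1 (by omega)
    _ = b := key
end
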